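/- Let G₁ be a finite connected graph that is not complete, let G₂ be a finite graph with at least one vertex, and let X ⊆ V(G₁) be a minimum vertex-cut of G₁. Then the set X̄ = X × V(G₂) is a minimum vertex-cut of the lexicographic product G₁∘G₂. -/

import Mathlib

/-- The lexicographic product of two simple graphs: `(x₁,y₁)` is adjacent to `(x₂,y₂)`
iff `x₁x₂` is an edge of `G`, or `x₁ = x₂` and `y₁y₂` is an edge of `H`. -/
def lexProd {V W : Type*} (G : SimpleGraph V) (H : SimpleGraph W) :
    SimpleGraph (V × W) where
  Adj p q := G.Adj p.1 q.1 ∨ (p.1 = q.1 ∧ H.Adj p.2 q.2)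
  symm := by
    refine ⟨?_⟩
    rintro ⟨x₁, y₁⟩ ⟨x₂, y₂⟩ (h | ⟨rfl, h⟩)
    · exact Or.inl h.symm
    · exact Or.inr ⟨rfl, h.symm⟩
  loopless := by
    refine ⟨?_⟩
    rintro ⟨x, y⟩ (h | ⟨-, h⟩)
    · exact G.loopless.irrefl x h
    · exact H.loopless.irrefl y h

/-- The set `V₀(G)` of isolated vertices of `G`. -/
def isoSet {V : Type*} (G : SimpleGraph V) : Set V := {v | ∀ w, ¬ G.Adj v w}

/-- The set of vertices of `G − S` that are isolated in `G − S`,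
i.e. `V₀(G − S)` regarded as a subset of the vertices of `G`. -/
def isolatedAfter {V : Type*} (G : SimpleGraph V) (S : Set V) : Set V :=
  {v | v ∉ S ∧ ∀ w ∉ S, ¬ G.Adj v w}

/-- `S` is a vertex-cut of `G`: deleting `S` leaves a disconnected graph, or reduces `G`
to the trivial one-vertex graph `K₁`. -/
def IsVertexCut {V : Type*} (G : SimpleGraph V) (S : Set V) : Prop :=
  (Sᶜ.Nonempty ∧ ¬ (G.induce Sᶜ).Connected) ∨ (∃ v, Sᶜ = {v})

/-- The connectivity `κ(G)`: the minimum cardinality of a vertex-cut of `G`. -/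
noncomputable def graphConnectivity {V : Type*} (G : SimpleGraph V) : ℕ :=
  sInf {n | ∃ S : Set V, IsVertexCut G S ∧ S.ncard = n}

/-- A minimum vertex-cut: a vertex-cut of cardinality `κ(G)`. -/
def IsMinVertexCut {V : Type*} (G : SimpleGraph V) (S : Set V) : Prop :=
  IsVertexCut G S ∧ S.ncard = graphConnectivity G

/-- A k₁-vertex-cut: a vertex-cut `S` such that `G − S` has no isolated vertices. -/
def IsK1VertexCut {V : Type*} (G : SimpleGraph V) (S : Set V) : Prop :=
  IsVertexCut G S ∧ ∀ v ∉ S, ∃ w ∉ S, G.Adj v w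

/-- The k₁-connectivity `k₁(G)`, valued in `ℕ∞`; it is `⊤` (infinity) if `G`
has no k₁-vertex-cut. -/
noncomputable def k1Connectivity {V : Type*} (G : SimpleGraph V) : ℕ∞ :=
  sInf {n : ℕ∞ | ∃ S : Set V, IsK1VertexCut G S ∧ (S.ncard : ℕ∞) = n}

/-- `G` is super connected if every minimum vertex-cut isolates a vertex,
i.e. some vertex of `G − S` has no neighbours in `G − S`. -/
def SuperConnected {V : Type*} (G : SimpleGraph V) : Prop :=
  ∀ S : Set V, IsMinVertexCut G S → ∃ v ∉ S, ∀ w ∉ S, ¬ G.Adj v w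


/-!
A minimum cut `X` of a non-complete graph leaves `G₁ − X` disconnected, and the columns
`X × V(G₂)` then separate `G₁∘G₂`, since every edge of the product projects to an edge or a
vertex of `G₁`. Conversely, for any vertex-cut `S` of the product, the set of columns lying
entirely in `S` is a vertex-cut of `G₁`: two vertices of `G₁∘G₂ − S` in different surviving
columns are joined by lifting a path of `G₁`, and two in the same column `a` are joined through
any surviving neighbour column of `a`. Hence `|S| ≥ κ(G₁)·|V(G₂)| = |X × V(G₂)|`.
-/

open SimpleGraph Set

section

variable {V W : Type*}

theorem SimpleGraph.Reachable.eq_of_forall_not_adj {G : SimpleGraph V} {a b : V}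
    (hab : G.Reachable a b) (ha : ∀ c, ¬ G.Adj a c) : a = b := by
  obtain ⟨p⟩ := hab
  cases p with
  | nil => rfl
  | cons h _ => exact absurd h (ha _)

theorem SimpleGraph.Reachable.map_of_adj {V' : Type*} {G : SimpleGraph V} {H : SimpleGraph V'}
    (f : V → V') (hf : ∀ a b, G.Adj a b → f a = f b ∨ H.Adj (f a) (f b)) {a b : V}
    (hab : G.Reachable a b) : H.Reachable (f a) (f b) := by
  rw [reachable_iff_reflTransGen] at hab ⊢
  refine Relation.ReflTransGen.lift' f (fun a b h => ?_) a b hab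
  change Relation.ReflTransGen H.Adj (f a) (f b)
  rcases hf a b h with heq | hadj
  · rw [heq]
  · exact .single hadj

section VertexCut

variable {G : SimpleGraph V} {S : Set V}

theorem isVertexCut_iff :
    IsVertexCut G S ↔ ¬ (G.induce Sᶜ).Preconnected ∨ ∃ v, Sᶜ = {v} := by
  refine or_congr_left ⟨fun ⟨hne, hdis⟩ hpre => hdis ((connected_iff _).mpr ⟨hpre, hne.to_subtype⟩),
    fun h => ?_⟩
  obtain ⟨a, -, -⟩ : ∃ a b : ↥Sᶜ, ¬ (G.induce Sᶜ).Reachable a b := by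
    simpa [Preconnected] using h
  exact ⟨⟨a, a.2⟩, fun hconn => h hconn.preconnected⟩

theorem isVertexCut_of_forall_not_adj {a : V} (ha : a ∉ S) (hiso : ∀ c ∉ S, ¬ G.Adj a c) :
    IsVertexCut G S := by
  by_cases hsingle : Sᶜ = {a}
  · exact Or.inr ⟨a, hsingle⟩
  obtain ⟨c, hc, hca⟩ : ∃ c ∉ S, c ≠ a := by
    by_contra! h
    exact hsingle (Set.eq_singleton_iff_unique_mem.mpr ⟨ha, h⟩)
  refine isVertexCut_iff.mpr (Or.inl fun hpre => hca ?_)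
  have := (hpre ⟨a, ha⟩ ⟨c, hc⟩).eq_of_forall_not_adj fun d hd => hiso d d.2 hd
  exact (congrArg Subtype.val this).symm

theorem graphConnectivity_le (hS : IsVertexCut G S) : graphConnectivity G ≤ S.ncard :=
  Nat.sInf_le ⟨S, hS, rfl⟩

theorem le_graphConnectivity {n : ℕ} (hex : ∃ S, IsVertexCut G S)
    (h : ∀ S, IsVertexCut G S → n ≤ S.ncard) : n ≤ graphConnectivity G := by
  obtain ⟨S, hS⟩ := hex
  exact le_csInf ⟨_, S, hS, rfl⟩ fun _ ⟨T, hT, hTn⟩ => hTn ▸ h T hT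

theorem graphConnectivity_add_two_le [Finite V] (hnc : G ≠ ⊤) :
    graphConnectivity G + 2 ≤ Nat.card V := by
  obtain ⟨u, v, huv, hadj⟩ : ∃ u v, u ≠ v ∧ ¬ G.Adj u v := by
    by_contra! h
    exact hnc (SimpleGraph.ext <| funext₂ fun a b => propext ⟨Adj.ne, h a b⟩)
  have hcut : IsVertexCut G ({u, v}ᶜ) := by
    refine isVertexCut_of_forall_not_adj (a := u) (by simp) fun c hc => ?_
    rcases Set.notMem_compl_iff.mp hc with rfl | rfl
    exacts [G.loopless.irrefl c, hadj]
  have hcard := Set.ncard_add_ncard_compl ({u, v} : Set V)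
  rw [Set.ncard_pair huv] at hcard
  have := graphConnectivity_le hcut
  omega

theorem IsMinVertexCut.not_preconnected [Finite V] (hnc : G ≠ ⊤) (hS : IsMinVertexCut G S) :
    ¬ (G.induce Sᶜ).Preconnected := by
  refine (isVertexCut_iff.mp hS.1).resolve_right fun ⟨v, hv⟩ => ?_
  have hcard := Set.ncard_add_ncard_compl S
  rw [hv, Set.ncard_singleton, hS.2] at hcard
  have := graphConnectivity_add_two_le hnc
  omega

end VertexCut

section LexProd

variable {G₁ : SimpleGraph V} {G₂ : SimpleGraph W}

theorem not_preconnected_lexProd_prod_univ [Nonempty W] {X : Set V}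
    (hX : ¬ (G₁.induce Xᶜ).Preconnected) :
    ¬ ((lexProd G₁ G₂).induce (X ×ˢ univ)ᶜ).Preconnected := by
  intro hpre
  refine hX fun a b => ?_
  let w : W := Classical.arbitrary W
  have hcol (p : ↥(X ×ˢ (univ : Set W))ᶜ) : p.1.1 ∈ Xᶜ := fun h => p.2 ⟨h, trivial⟩
  exact (hpre ⟨(a, w), fun h => a.2 h.1⟩ ⟨(b, w), fun h => b.2 h.1⟩).map_of_adj
    (H := G₁.induce Xᶜ) (fun p => (⟨p.1.1, hcol p⟩ : ↥Xᶜ)) fun p q hpq => by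
      rcases hpq with hadj | ⟨heq, -⟩
      exacts [Or.inr hadj, Or.inl (Subtype.ext heq)]

def fullColumns (S : Set (V × W)) : Set V := {v | ∀ w, (v, w) ∈ S}

variable {S : Set (V × W)}

theorem notMem_fullColumns {v : V} : v ∉ fullColumns S ↔ ∃ w, (v, w) ∉ S := by
  simp [fullColumns]

theorem ncard_fullColumns_mul_le [Finite V] [Finite W] :
    (fullColumns S).ncard * Nat.card W ≤ S.ncard := by
  rw [← Set.ncard_univ W, ← Set.ncard_prod]
  exact Set.ncard_le_ncard fun p hp => hp.1 p.2

theorem reachable_lexProd_of_reachable {u v : ↥(fullColumns S)ᶜ}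
    (huv : (G₁.induce (fullColumns S)ᶜ).Reachable u v) (hne : u ≠ v) {y z : W}
    (hy : (u.1, y) ∉ S) (hz : (v.1, z) ∉ S) :
    ((lexProd G₁ G₂).induce Sᶜ).Reachable ⟨(u.1, y), hy⟩ ⟨(v.1, z), hz⟩ := by
  obtain ⟨p⟩ := huv
  induction p generalizing y with
  | nil => exact absurd rfl hne
  | @cons u c v hadj p ih =>
    by_cases hcv : c = v
    · subst hcv
      exact Adj.reachable (G := (lexProd G₁ G₂).induce Sᶜ) (u := ⟨(u.1, y), hy⟩) (Or.inl hadj)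
    obtain ⟨w, hw⟩ := notMem_fullColumns.mp c.2
    exact (Adj.reachable (G := (lexProd G₁ G₂).induce Sᶜ)
      (u := ⟨(u.1, y), hy⟩) (v := ⟨(c.1, w), hw⟩) (Or.inl hadj)).trans (ih hcv hw hz)

theorem IsVertexCut.fullColumns_of_lexProd (hS : IsVertexCut (lexProd G₁ G₂) S) :
    IsVertexCut G₁ (fullColumns S) := by
  rcases isVertexCut_iff.mp hS with hS | ⟨p, hp⟩
  · obtain ⟨p, q, hpq⟩ : ∃ p q : ↥Sᶜ, ¬ ((lexProd G₁ G₂).induce Sᶜ).Reachable p q := by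
      simpa [Preconnected] using hS
    have hp : p.1.1 ∉ fullColumns S := notMem_fullColumns.mpr ⟨_, p.2⟩
    have hq : q.1.1 ∉ fullColumns S := notMem_fullColumns.mpr ⟨_, q.2⟩
    by_cases hcol : p.1.1 = q.1.1
    · refine isVertexCut_of_forall_not_adj hp fun c hc hadj => hpq ?_
      obtain ⟨w, hw⟩ := notMem_fullColumns.mp hc
      have hpc : ((lexProd G₁ G₂).induce Sᶜ).Adj p ⟨(c, w), hw⟩ := Or.inl hadj
      have hcq : ((lexProd G₁ G₂).induce Sᶜ).Adj ⟨(c, w), hw⟩ q := Or.inl (hcol ▸ hadj.symm)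
      exact hpc.reachable.trans hcq.reachable
    · refine isVertexCut_iff.mpr (Or.inl fun hpre => hpq ?_)
      exact reachable_lexProd_of_reachable (hpre ⟨_, hp⟩ ⟨_, hq⟩)
        (fun h => hcol (congrArg Subtype.val h)) p.2 q.2
  · refine Or.inr ⟨p.1, Set.ext fun v => ?_⟩
    rw [Set.mem_compl_iff, notMem_fullColumns, Set.mem_singleton_iff]
    simp only [← Set.mem_compl_iff, hp, Set.mem_singleton_iff]
    exact ⟨fun ⟨w, h⟩ => h ▸ rfl, fun h => ⟨p.2, h ▸ rfl⟩⟩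

theorem graphConnectivity_mul_card_le [Finite V] [Finite W]
    (hS : IsVertexCut (lexProd G₁ G₂) S) :
    graphConnectivity G₁ * Nat.card W ≤ S.ncard :=
  (Nat.mul_le_mul_right _ (graphConnectivity_le hS.fullColumns_of_lexProd)).trans
    ncard_fullColumns_mul_le

end LexProd

end

theorem isMinVertexCut_prod_general {V W : Type*} [Fintype V] [Fintype W] [Nonempty W]
    (G₁ : SimpleGraph V) (G₂ : SimpleGraph W)
    (hnc : G₁ ≠ ⊤)
    (X : Set V) (hX : IsMinVertexCut G₁ X) :
    IsMinVertexCut (lexProd G₁ G₂) (X ×ˢ (Set.univ : Set W)) := by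
  have hcut : IsVertexCut (lexProd G₁ G₂) (X ×ˢ univ) :=
    isVertexCut_iff.mpr (Or.inl (not_preconnected_lexProd_prod_univ (hX.not_preconnected hnc)))
  refine ⟨hcut, le_antisymm ?_ (graphConnectivity_le hcut)⟩
  rw [Set.ncard_prod, Set.ncard_univ, hX.2]
  exact le_graphConnectivity ⟨_, hcut⟩ fun S hS => graphConnectivity_mul_card_le hS

/-- If X is a minimum vertex-cut of the connected non-complete graph G₁, then
X̄ = X × V(G₂) is a minimum vertex-cut of G₁∘G₂. -/
theorem isMinVertexCut_prod {V W : Type*} [Fintype V] [Fintype W] [Nonempty W]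
    (G₁ : SimpleGraph V) (G₂ : SimpleGraph W)
    (hconn : G₁.Connected) (hnc : G₁ ≠ ⊤)
    (X : Set V) (hX : IsMinVertexCut G₁ X) :
    IsMinVertexCut (lexProd G₁ G₂) (X ×ˢ (Set.univ : Set W)) :=
  isMinVertexCut_prod_general G₁ G₂ hnc X hX
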